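/- For every c > 0 and every μ ∈ S₁, the mean of F_c(μ) is at most twice the mean of μ; in particular F_c maps S₁ into S₁. -/

import Mathlib

open Filter Topology Set

noncomputable section

/-- Convolution of two (sub)probability mass functions on `ℕ∞ = ℕ⁺ ∪ {∞} ∪ {0}`,
with the convention `∞ + anything = ∞`. -/
def conv (μ ν : ℕ∞ → ℝ) : ℕ∞ → ℝ :=
  fun k => ∑' p : ℕ∞ × ℕ∞, if p.1 + p.2 = k then μ p.1 * ν p.2 else 0

/-- The factor `(l(l-1)/2) / (l(l-1)/2 + c)`, the probability that the coalescence
from `l` to `l-1` lineages happens before an independent `Exp(c)` time. -/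
def kingmanFactor (c : ℝ) (l : ℕ) : ℝ :=
  ((l : ℝ) * ((l : ℝ) - 1) / 2) / ((l : ℝ) * ((l : ℝ) - 1) / 2 + c)

/-- `pK c j i` : the probability that Kingman's coalescent started from `j` lineages
has exactly `i` lineages at an independent exponential time with rate `c`. -/
def pK (c : ℝ) (j : ℕ∞) (i : ℕ) : ℝ :=
  (c / ((i : ℝ) * ((i : ℝ) - 1) / 2 + c)) *
    (if j = ⊤ then ∏' l : ℕ, kingmanFactor c (i + 1 + l)
     else ∏ l ∈ Finset.Icc (i + 1) j.toNat, kingmanFactor c l)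

/-- The mass that `F_c μ` puts on a finite `k ∈ ℕ⁺`. -/
def FcFin (c : ℝ) (μ : ℕ∞ → ℝ) (k : ℕ) : ℝ :=
  ∑' j : ℕ∞, if (k : ℕ∞) ≤ j then conv μ μ j * pK c j k else 0

/-- The map `F_c` on distributions on `ℕ⁺ ∪ {∞}`; the mass at `∞` is the remaining mass. -/
def Fc (c : ℝ) (μ : ℕ∞ → ℝ) : ℕ∞ → ℝ :=
  fun k =>
    if k = ⊤ then 1 - ∑' n : ℕ, FcFin c μ n
    else if k = 0 then 0 else FcFin c μ k.toNat

/-- `μ` is a probability distribution on `ℕ⁺ ∪ {∞}` (no mass at `0`). -/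
def IsDist (μ : ℕ∞ → ℝ) : Prop :=
  (∀ k, 0 ≤ μ k) ∧ μ 0 = 0 ∧ HasSum μ 1

/-- The mean of a distribution on `ℕ⁺ ∪ {∞}` (ignoring the mass at `∞`). -/
def distMean (μ : ℕ∞ → ℝ) : ℝ := ∑' n : ℕ, (n : ℝ) * μ (n : ℕ∞)

/-- `μ` belongs to `S₁`: a probability distribution on `ℕ⁺` with finite mean. -/
def MemS1 (μ : ℕ∞ → ℝ) : Prop :=
  IsDist μ ∧ μ ⊤ = 0 ∧ Summable (fun n : ℕ => (n : ℝ) * μ (n : ℕ∞))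

/-- `StDom μ ν` : `μ ⪯ ν` in the usual stochastic order, i.e.
`μ([0,x]) ≥ ν([0,x])` for all `x ∈ [0,∞]`. -/
def StDom (μ ν : ℕ∞ → ℝ) : Prop :=
  ∀ x : ℕ∞, (∑' k : ℕ∞, if k ≤ x then ν k else 0) ≤ ∑' k : ℕ∞, if k ≤ x then μ k else 0

/-- The unit point mass at `a`. -/
def delta (a : ℕ∞) : ℕ∞ → ℝ := fun k => if k = a then 1 else 0

end

/-!
Let `f_l = kingmanFactor c l`, so `f_0 = f_1 = 0` and `1 - f_l = c / (l(l-1)/2 + c)`. For finite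
`j`, `p_c(j, k) = (1 - f_k) ∏_{k < l ≤ j} f_l`, and the row `k ↦ p_c(j, k)` on `{0, …, j}`
telescopes to `1 - ∏_{l ≤ j} f_l = 1`. Thus `F_c(μ)` is the mixture, over `J ∼ μ∗μ`, of the
probability laws `p_c(J, ·)`, each supported below `J`: it is a probability distribution on `ℕ⁺`
and its mean is at most that of `μ∗μ`, which is `2 · mean(μ)` by the Cauchy product formula.
-/

open Finset.HasAntidiagonal (antidiagonal mem_antidiagonal)

theorem ENat.hasSum_natCast_iff {α : Type*} [AddCommMonoid α] [TopologicalSpace α]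
    {f : ℕ∞ → α} (hf : f ⊤ = 0) {a : α} : HasSum (fun n : ℕ => f n) a ↔ HasSum f a :=
  Nat.cast_injective.hasSum_iff fun k hk => by
    obtain rfl : k = ⊤ := by simpa [WithTop.ne_top_iff_exists, eq_comm] using hk
    exact hf

theorem ENat.tsum_natCast {α : Type*} [AddCommMonoid α] [TopologicalSpace α]
    {f : ℕ∞ → α} (hf : f ⊤ = 0) : ∑' n : ℕ, f n = ∑' k, f k :=
  Nat.cast_injective.tsum_eq fun k hk => by
    obtain ⟨n, rfl⟩ := WithTop.ne_top_iff_exists.1 fun h : k = ⊤ => hk (h ▸ hf)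
    exact ⟨n, rfl⟩

theorem conv_natCast (μ ν : ℕ∞ → ℝ) (n : ℕ) :
    conv μ ν n = ∑ p ∈ antidiagonal n, μ p.1 * ν p.2 := by
  set e : ℕ × ℕ → ℕ∞ × ℕ∞ := fun q => ((q.1 : ℕ∞), (q.2 : ℕ∞))
  have he : Function.Injective e := fun p q h => by
    simpa [e, Prod.ext_iff] using h
  rw [conv, tsum_eq_sum (s := (antidiagonal n).image e), Finset.sum_image fun p _ q _ h => he h]
  · refine Finset.sum_congr rfl fun p hp => ?_
    replace hp := mem_antidiagonal.1 hp
    simp [e, ← hp]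
  · intro p hp
    rw [if_neg]
    rintro hsum
    obtain ⟨a, ha⟩ : ∃ a : ℕ, (a : ℕ∞) = p.1 := WithTop.ne_top_iff_exists.1
      (ne_top_of_le_ne_top (hsum ▸ ENat.natCast_ne_top n) le_self_add)
    obtain ⟨b, hb⟩ : ∃ b : ℕ, (b : ℕ∞) = p.2 := WithTop.ne_top_iff_exists.1
      (ne_top_of_le_ne_top (hsum ▸ ENat.natCast_ne_top n) le_add_self)
    refine hp (Finset.mem_image.2 ⟨(a, b), ?_, by simp [e, ha, hb]⟩)
    exact mem_antidiagonal.2 (by exact_mod_cast ha ▸ hb ▸ hsum)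

theorem conv_top {μ ν : ℕ∞ → ℝ} (hμ : μ ⊤ = 0) (hν : ν ⊤ = 0) : conv μ ν ⊤ = 0 := by
  refine (tsum_congr fun p => ?_).trans tsum_zero
  split_ifs with h
  · rcases ENat.add_eq_top.1 h with h | h <;> simp [h, hμ, hν]
  · rfl

theorem conv_zero {μ : ℕ∞ → ℝ} (hμ : μ 0 = 0) (ν : ℕ∞ → ℝ) : conv μ ν 0 = 0 := by
  simpa [hμ] using conv_natCast μ ν 0

theorem conv_nonneg {μ ν : ℕ∞ → ℝ} (hμ : ∀ k, 0 ≤ μ k) (hν : ∀ k, 0 ≤ ν k) (k : ℕ∞) :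
    0 ≤ conv μ ν k :=
  tsum_nonneg fun p => by split_ifs <;> first | exact mul_nonneg (hμ _) (hν _) | exact le_rfl

theorem hasSum_sum_antidiagonal_mul {f g : ℕ → ℝ} {a b : ℝ} (hf0 : 0 ≤ f) (hg0 : 0 ≤ g)
    (hf : HasSum f a) (hg : HasSum g b) :
    HasSum (fun n => ∑ kl ∈ antidiagonal n, f kl.1 * g kl.2) (a * b) := by
  have hfg := hf.summable.mul_of_nonneg hg.summable hf0 hg0
  have h := (summable_sum_mul_antidiagonal_of_summable_mul hfg).hasSum
  rwa [← hf.summable.tsum_mul_tsum_eq_tsum_sum_antidiagonal hg.summable hfg, hf.tsum_eq,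
    hg.tsum_eq] at h

theorem hasSum_natCast_mul_sum_antidiagonal_mul {f g : ℕ → ℝ} {a b A B : ℝ} (hf0 : 0 ≤ f)
    (hg0 : 0 ≤ g) (hf : HasSum f a) (hg : HasSum g b)
    (hfA : HasSum (fun n => n * f n) A) (hgB : HasSum (fun n => n * g n) B) :
    HasSum (fun n => n * ∑ kl ∈ antidiagonal n, f kl.1 * g kl.2) (A * b + a * B) := by
  have hnf : 0 ≤ fun n : ℕ => n * f n := fun n => mul_nonneg n.cast_nonneg (hf0 n)
  have hng : 0 ≤ fun n : ℕ => n * g n := fun n => mul_nonneg n.cast_nonneg (hg0 n)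
  convert (hasSum_sum_antidiagonal_mul hnf hg0 hfA hg).add
    (hasSum_sum_antidiagonal_mul hf0 hng hf hgB) using 1
  funext n
  rw [Finset.mul_sum, ← Finset.sum_add_distrib]
  refine Finset.sum_congr rfl fun kl hkl => ?_
  rw [← mem_antidiagonal.1 hkl]
  push_cast
  ring

theorem sum_range_one_sub_mul_prod_Icc {R : Type*} [CommRing R] (f : ℕ → R) (j : ℕ) :
    ∑ k ∈ Finset.range (j + 1), (1 - f k) * ∏ l ∈ Finset.Icc (k + 1) j, f l
      = 1 - ∏ l ∈ Finset.range (j + 1), f l := by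
  induction j with
  | zero => simp
  | succ j ih =>
    have hstep : ∀ k ∈ Finset.range (j + 1), (1 - f k) * ∏ l ∈ Finset.Icc (k + 1) (j + 1), f l
        = (1 - f k) * (∏ l ∈ Finset.Icc (k + 1) j, f l) * f (j + 1) := fun k hk => by
      rw [Finset.prod_Icc_succ_top (by simpa using hk), mul_assoc]
    rw [Finset.sum_range_succ, Finset.sum_congr rfl hstep, ← Finset.sum_mul, ih,
      Finset.prod_range_succ _ (j + 1), Finset.Icc_eq_empty (by omega), Finset.prod_empty]
    ring

theorem kingmanFactor_zero (c : ℝ) : kingmanFactor c 0 = 0 := by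
  simp [kingmanFactor]

theorem kingmanFactor_one (c : ℝ) : kingmanFactor c 1 = 0 := by
  simp [kingmanFactor]

theorem natCast_mul_natCast_sub_one_div_two_nonneg (l : ℕ) : 0 ≤ (l : ℝ) * ((l : ℝ) - 1) / 2 := by
  rcases l with _ | l
  · simp
  · push_cast
    rw [add_sub_cancel_right]
    positivity

theorem kingmanFactor_nonneg {c : ℝ} (hc : 0 ≤ c) (l : ℕ) : 0 ≤ kingmanFactor c l := by
  have := natCast_mul_natCast_sub_one_div_two_nonneg l
  unfold kingmanFactor
  positivity

theorem kingmanFactor_le_one {c : ℝ} (hc : 0 ≤ c) (l : ℕ) : kingmanFactor c l ≤ 1 := by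
  have := natCast_mul_natCast_sub_one_div_two_nonneg l
  exact div_le_one_of_le₀ (le_add_of_nonneg_right hc) (by positivity)

theorem one_sub_kingmanFactor {c : ℝ} (hc : 0 < c) (l : ℕ) :
    1 - kingmanFactor c l = c / ((l : ℝ) * ((l : ℝ) - 1) / 2 + c) := by
  have : 0 < (l : ℝ) * ((l : ℝ) - 1) / 2 + c := by
    have := natCast_mul_natCast_sub_one_div_two_nonneg l
    positivity
  rw [kingmanFactor, eq_div_iff this.ne', sub_mul, div_mul_cancel₀ _ this.ne']
  ring

theorem pK_natCast {c : ℝ} (hc : 0 < c) (j k : ℕ) :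
    pK c j k = (1 - kingmanFactor c k) * ∏ l ∈ Finset.Icc (k + 1) j, kingmanFactor c l := by
  simp [pK, one_sub_kingmanFactor hc]

-- The guard matters: for `k > j` the product in `pK c j k` is empty, so `pK c j k ≠ 0`.
noncomputable def kingmanKernel (c : ℝ) (j k : ℕ) : ℝ := if k ≤ j then pK c j k else 0

theorem kingmanKernel_nonneg {c : ℝ} (hc : 0 < c) (j k : ℕ) : 0 ≤ kingmanKernel c j k := by
  unfold kingmanKernel
  split_ifs
  · rw [pK_natCast hc]
    exact mul_nonneg (sub_nonneg.2 (kingmanFactor_le_one hc.le k))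
      (Finset.prod_nonneg fun l _ => kingmanFactor_nonneg hc.le l)
  · rfl

theorem kingmanKernel_eq_zero_of_lt (c : ℝ) {j k : ℕ} (h : j < k) : kingmanKernel c j k = 0 :=
  if_neg (by omega)

theorem kingmanKernel_zero_right {c : ℝ} (hc : 0 < c) {j : ℕ} (hj : j ≠ 0) :
    kingmanKernel c j 0 = 0 := by
  rw [kingmanKernel, if_pos j.zero_le, pK_natCast hc,
    Finset.prod_eq_zero (Finset.mem_Icc.2 ⟨le_rfl, by omega⟩) (kingmanFactor_one c), mul_zero]

theorem hasSum_kingmanKernel {c : ℝ} (hc : 0 < c) (j : ℕ) : HasSum (kingmanKernel c j) 1 := by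
  have h : HasSum (kingmanKernel c j) (∑ k ∈ Finset.range (j + 1), kingmanKernel c j k) :=
    hasSum_sum_of_ne_finset_zero fun k hk =>
      kingmanKernel_eq_zero_of_lt c (by simpa using hk)
  have hrow : ∀ k ∈ Finset.range (j + 1), kingmanKernel c j k
      = (1 - kingmanFactor c k) * ∏ l ∈ Finset.Icc (k + 1) j, kingmanFactor c l := fun k hk => by
    rw [kingmanKernel, if_pos (Nat.lt_succ_iff.1 (Finset.mem_range.1 hk)), pK_natCast hc]
  rwa [Finset.sum_congr rfl hrow, sum_range_one_sub_mul_prod_Icc,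
    Finset.prod_eq_zero (Finset.mem_range.2 j.succ_pos) (kingmanFactor_zero c), sub_zero] at h

theorem hasSum_tsum_fst_of_nonneg {β γ : Type*} {H : β × γ → ℝ} (hH : 0 ≤ H) {r : β → ℝ} {s : ℝ}
    (hrow : ∀ b, HasSum (fun c => H (b, c)) (r b)) (hr : HasSum r s) :
    HasSum (fun c => ∑' b, H (b, c)) s := by
  have hsum : Summable H := (summable_prod_of_nonneg hH).2
    ⟨fun b => (hrow b).summable, hr.summable.congr fun b => ((hrow b).tsum_eq).symm⟩
  have hHs : HasSum H s := hr.unique (hsum.hasSum.prod_fiberwise hrow) ▸ hsum.hasSum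
  have hswap : HasSum (H ∘ Prod.swap) s := (Equiv.prodComm γ β).hasSum_iff.2 hHs
  exact hswap.prod_fiberwise fun c => (hswap.summable.prod_factor c).hasSum

section StochasticKernel

variable {K : ℕ → ℕ → ℝ} {ν : ℕ → ℝ}

theorem hasSum_tsum_mul_of_stochastic (hK0 : ∀ j k, 0 ≤ K j k) (hK : ∀ j, HasSum (K j) 1)
    (hν0 : 0 ≤ ν) {s : ℝ} (hν : HasSum ν s) : HasSum (fun k => ∑' j, ν j * K j k) s :=
  hasSum_tsum_fst_of_nonneg (fun p => mul_nonneg (hν0 p.1) (hK0 p.1 p.2))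
    (fun j => by simpa using (hK j).mul_left (ν j)) hν

theorem exists_hasSum_natCast_mul_tsum_mul_le (hK0 : ∀ j k, 0 ≤ K j k)
    (hK : ∀ j, HasSum (K j) 1) (hK_lt : ∀ j k, j < k → K j k = 0) (hν0 : 0 ≤ ν) {M : ℝ}
    (hM : HasSum (fun j => j * ν j) M) :
    ∃ M' ≤ M, HasSum (fun k => k * ∑' j, ν j * K j k) M' := by
  set H : ℕ × ℕ → ℝ := fun p => p.2 * (ν p.1 * K p.1 p.2)
  have hH0 : 0 ≤ H := fun p => mul_nonneg p.2.cast_nonneg (mul_nonneg (hν0 p.1) (hK0 p.1 p.2))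
  have hH_le : ∀ j k, H (j, k) ≤ j * ν j * K j k := fun j k => by
    rcases le_or_gt k j with hkj | hjk
    · rw [mul_assoc]
      exact mul_le_mul_of_nonneg_right (Nat.cast_le.2 hkj) (mul_nonneg (hν0 j) (hK0 j k))
    · simp [H, hK_lt j k hjk]
  have hrow : ∀ j, Summable fun k => H (j, k) := fun j =>
    Summable.of_nonneg_of_le (fun k => hH0 (j, k)) (hH_le j) ((hK j).mul_left _).summable
  have hrow_le : ∀ j, ∑' k, H (j, k) ≤ j * ν j := fun j => by
    simpa using hasSum_le (hH_le j) (hrow j).hasSum ((hK j).mul_left (j * ν j))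
  have hr : Summable fun j => ∑' k, H (j, k) :=
    Summable.of_nonneg_of_le (fun j => tsum_nonneg fun k => hH0 (j, k)) hrow_le hM.summable
  refine ⟨_, hasSum_le hrow_le hr.hasSum hM, ?_⟩
  simpa only [H, tsum_mul_left] using
    hasSum_tsum_fst_of_nonneg hH0 (fun j => (hrow j).hasSum) hr.hasSum

end StochasticKernel

theorem FcFin_eq_tsum_conv_mul_kingmanKernel (c : ℝ) {μ : ℕ∞ → ℝ} (hμ : μ ⊤ = 0) (k : ℕ) :
    FcFin c μ k = ∑' j : ℕ, conv μ μ j * kingmanKernel c j k := by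
  rw [FcFin, ← ENat.tsum_natCast (by simp [conv_top hμ hμ])]
  simp only [Nat.cast_le, kingmanKernel, mul_ite, mul_zero]

theorem memS1_Fc_of_hasSum {c : ℝ} {μ : ℕ∞ → ℝ} {w : ℝ} (h0 : FcFin c μ 0 = 0)
    (hnn : ∀ n, 0 ≤ FcFin c μ n) (h1 : HasSum (FcFin c μ) 1)
    (hw : HasSum (fun n : ℕ => n * FcFin c μ n) w) :
    MemS1 (Fc c μ) ∧ distMean (Fc c μ) = w := by
  have hnat : ∀ n : ℕ, Fc c μ n = FcFin c μ n := fun n => by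
    rcases eq_or_ne n 0 with rfl | hn
    · simp [Fc, h0]
    · simp [Fc, hn]
  have htop : Fc c μ ⊤ = 0 := by simp [Fc, h1.tsum_eq]
  simp only [MemS1, IsDist, distMean, hnat]
  refine ⟨⟨⟨fun k => ?_, by simp [Fc], ?_⟩, htop, hw.summable⟩, hw.tsum_eq⟩
  · induction k using ENat.recTopCoe with
    | top => exact htop.ge
    | coe n => exact hnat n ▸ hnn n
  · exact (ENat.hasSum_natCast_iff htop).1 (by simpa only [hnat] using h1)

theorem FcFin_zero {c : ℝ} (hc : 0 < c) {μ : ℕ∞ → ℝ} (hμ_top : μ ⊤ = 0) (hμ_zero : μ 0 = 0) :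
    FcFin c μ 0 = 0 := by
  rw [FcFin_eq_tsum_conv_mul_kingmanKernel c hμ_top]
  refine (tsum_congr fun j => ?_).trans tsum_zero
  rcases eq_or_ne j 0 with rfl | hj
  · exact mul_eq_zero_of_left (conv_zero hμ_zero μ) _
  · rw [kingmanKernel_zero_right hc hj, mul_zero]

theorem MemS1.hasSum_natCast {μ : ℕ∞ → ℝ} (hμ : MemS1 μ) : HasSum (fun n : ℕ => μ n) 1 :=
  (ENat.hasSum_natCast_iff hμ.2.1).2 hμ.1.2.2

theorem MemS1.hasSum_distMean {μ : ℕ∞ → ℝ} (hμ : MemS1 μ) :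
    HasSum (fun n : ℕ => n * μ n) (distMean μ) :=
  hμ.2.2.hasSum

theorem MemS1.hasSum_conv_self {μ : ℕ∞ → ℝ} (hμ : MemS1 μ) :
    HasSum (fun n : ℕ => conv μ μ n) 1 := by
  have hμ0 : 0 ≤ fun n : ℕ => μ n := fun n => hμ.1.1 n
  simpa [conv_natCast] using
    hasSum_sum_antidiagonal_mul hμ0 hμ0 hμ.hasSum_natCast hμ.hasSum_natCast

theorem MemS1.hasSum_natCast_mul_conv_self {μ : ℕ∞ → ℝ} (hμ : MemS1 μ) :
    HasSum (fun n : ℕ => n * conv μ μ n) (2 * distMean μ) := by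
  have hμ0 : 0 ≤ fun n : ℕ => μ n := fun n => hμ.1.1 n
  simpa [conv_natCast, two_mul] using
    hasSum_natCast_mul_sum_antidiagonal_mul hμ0 hμ0 hμ.hasSum_natCast hμ.hasSum_natCast
      hμ.hasSum_distMean hμ.hasSum_distMean

/-- For every `c > 0` and `μ ∈ S₁`, the mean of `F_c(μ)` is at most
twice the mean of `μ`; in particular `F_c` maps `S₁` into `S₁`. -/
theorem Fc_maps_S1 (c : ℝ) (hc : 0 < c) (μ : ℕ∞ → ℝ) (hμ : MemS1 μ) :
    MemS1 (Fc c μ) ∧ distMean (Fc c μ) ≤ 2 * distMean μ := by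
  set ν : ℕ → ℝ := fun j => conv μ μ j
  have hν0 : 0 ≤ ν := fun n => conv_nonneg hμ.1.1 hμ.1.1 n
  have hF : FcFin c μ = fun k => ∑' j, ν j * kingmanKernel c j k :=
    funext (FcFin_eq_tsum_conv_mul_kingmanKernel c hμ.2.1)
  have hF_sum := hasSum_tsum_mul_of_stochastic (kingmanKernel_nonneg hc)
    (hasSum_kingmanKernel hc) hν0 hμ.hasSum_conv_self
  obtain ⟨M, hM, hF_mean⟩ := exists_hasSum_natCast_mul_tsum_mul_le (kingmanKernel_nonneg hc)
    (hasSum_kingmanKernel hc) (fun _ _ => kingmanKernel_eq_zero_of_lt c) hν0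
    hμ.hasSum_natCast_mul_conv_self
  obtain ⟨hS1, hF_mean_eq⟩ := memS1_Fc_of_hasSum (FcFin_zero hc hμ.2.1 hμ.1.2.1)
    (fun n => hF ▸ tsum_nonneg fun j => mul_nonneg (hν0 j) (kingmanKernel_nonneg hc j n))
    (hF ▸ hF_sum) (by rw [hF]; exact hF_mean)
  exact ⟨hS1, hF_mean_eq ▸ hM⟩
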